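/- Let Γ be a finite connected graph, (Γ₁, Γ₂, Γ₃) a splitting of Γ, and f : A(Γ) → ℝ a nonzero homomorphism with discrete image whose kernel is finitely generated. Then the restriction f₃ of f to A(Γ₃) is not identically zero. -/

import Mathlib

/-- The defining relators of the right-angled Artin group of a graph. -/
def raagRels {V : Type*} (Γ : SimpleGraph V) : Set (FreeGroup V) :=
  {r | ∃ v w : V, Γ.Adj v w ∧
    r = FreeGroup.of v * FreeGroup.of w * (FreeGroup.of v)⁻¹ * (FreeGroup.of w)⁻¹}

/-- The right-angled Artin group of a graph Γ. -/
def RAAG {V : Type*} (Γ : SimpleGraph V) : Type _ := PresentedGroup (raagRels Γ)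

noncomputable instance {V : Type*} (Γ : SimpleGraph V) : Group (RAAG Γ) :=
  inferInstanceAs (Group (PresentedGroup (raagRels Γ)))

/-- The generator of `RAAG Γ` corresponding to a vertex. -/
def RAAG.of {V : Type*} {Γ : SimpleGraph V} (v : V) : RAAG Γ := PresentedGroup.of v

/-- A homomorphism `A(Γ) → (ℝ,+)` (encoded as a monoid hom to `Multiplicative ℝ`) is
discrete if its image is an infinite cyclic subgroup of ℝ, i.e. the set of integer
multiples of some nonzero real number. -/
def IsDiscreteChar {V : Type*} {Γ : SimpleGraph V} (f : RAAG Γ →* Multiplicative ℝ) : Prop :=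
  ∃ a : ℝ, a ≠ 0 ∧ (∀ x : RAAG Γ, ∃ n : ℤ, (f x).toAdd = n • a) ∧
    ∃ x : RAAG Γ, (f x).toAdd = a

/-!
Suppose `f` vanishes on `Γ₃`. A live vertex `p` (one with `f p ≠ 0`) lies on one side, say in
`Γ₁ ∖ Γ₂`, and `Γ₂ ∖ Γ₁` is nonempty. If `Γ₂ ∖ Γ₁` contains a live vertex, the dead graph `Γ₃`
separates it from `p`, so the living subgraph is disconnected; otherwise any vertex of
`Γ₂ ∖ Γ₁` is dead together with all its neighbours, so the living subgraph is not dominating.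

In both cases `f` lifts to a homomorphism `h` into the wreath product `ℤ ≀ ℝ = ℤ[ℝ] ⋊ ℝ` such
that some element of `ker f` has a nonzero lamp part. The lamp parts of `ker f` form a quotient
of `ker f` that is stable under multiplication by `X ^ t` for some `t ≠ 0`; such a subgroup of
`ℤ[ℝ]` has unbounded support, so it is not finitely generated, and neither is `ker f`.
-/

open AddMonoidAlgebra SemidirectProduct

noncomputable def lampShift : Multiplicative ℝ →* MulAut (Multiplicative ℤ[ℝ]) where
  toFun t :=
    { toFun := fun P => .ofAdd (single t.toAdd 1 * P.toAdd)
      invFun := fun P => .ofAdd (single (-t.toAdd) 1 * P.toAdd)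
      left_inv := fun P => by simp [← mul_assoc, single_mul_single, ← one_def]
      right_inv := fun P => by simp [← mul_assoc, single_mul_single, ← one_def]
      map_mul' := fun P Q => by simp [mul_add] }
  map_one' := by ext; simp [← one_def]
  map_mul' s t := by ext; simp [← mul_assoc, single_mul_single]

lemma lampShift_apply (t : Multiplicative ℝ) (P : Multiplicative ℤ[ℝ]) :
    lampShift t P = .ofAdd (single t.toAdd 1 * P.toAdd) := rfl

lemma lampShift_pow_apply (t : Multiplicative ℝ) (j : ℕ) (P : Multiplicative ℤ[ℝ]) :
    (lampShift t ^ j) P = .ofAdd (single (j • t.toAdd) 1 * P.toAdd) := by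
  rw [← map_pow, lampShift_apply, toAdd_pow]

/-- The restricted wreath product `ℤ ≀ ℝ`: finitely supported `ℤ`-valued lamp configurations on
`ℝ`, written as `ℤ[ℝ]`, on which `t : ℝ` acts by multiplication with the monomial `X ^ t`. -/
abbrev LampGroup := Multiplicative ℤ[ℝ] ⋊[lampShift] Multiplicative ℝ

lemma AddMonoidAlgebra.single_sub_one_ne_zero {R M : Type*} [Ring R] [Nontrivial R] [AddMonoid M]
    {a : M} (ha : a ≠ 0) : (single a 1 - 1 : R[M]) ≠ 0 := by
  rw [sub_ne_zero, one_def, Ne, single_left_inj one_ne_zero]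
  exact ha

theorem Subgroup.FG.exists_finset_support_subset {H : Subgroup (Multiplicative ℤ[ℝ])}
    (hH : H.FG) : ∃ U : Finset ℝ, ∀ P ∈ H, P.toAdd.coeff.support ⊆ U := by
  classical
  obtain ⟨S, rfl⟩ := hH
  refine ⟨S.biUnion fun s => s.toAdd.coeff.support, fun P hP => ?_⟩
  induction hP using Subgroup.closure_induction with
  | mem s hs => exact Finset.subset_biUnion_of_mem (fun s => s.toAdd.coeff.support) hs
  | one => simp
  | mul P Q _ _ hP hQ =>
    exact (Finsupp.support_add).trans (Finset.union_subset hP hQ)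
  | inv P _ hP => simpa using hP

theorem Subgroup.eq_bot_of_fg_of_lampShift_mem {H : Subgroup (Multiplicative ℤ[ℝ])} (hH : H.FG)
    {t : Multiplicative ℝ} (ht : t ≠ 1) (hshift : ∀ P ∈ H, lampShift t P ∈ H) : H = ⊥ := by
  obtain ⟨U, hU⟩ := hH.exists_finset_support_subset
  refine (Subgroup.eq_bot_iff_forall H).2 fun Q hQ => by_contra fun hQ1 => ?_
  obtain ⟨q, hq⟩ : Q.toAdd.coeff.support.Nonempty := by
    simpa [Finsupp.support_nonempty_iff] using hQ1
  have hmem (j : ℕ) : j • t.toAdd + q ∈ U := by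
    have hjQ : (lampShift t ^ j) Q ∈ H := by
      induction j with
      | zero => exact hQ
      | succ j ih => rw [pow_succ', MulAut.mul_apply]; exact hshift _ ih
    refine hU _ hjQ ?_
    simpa [lampShift_pow_apply] using hq
  have hinj : Function.Injective fun j : ℕ => j • t.toAdd + q := by
    intro i j hij
    simpa [ht] using hij
  exact Set.infinite_of_injective_forall_mem hinj hmem U.finite_toSet

namespace LampGroup

lemma conj_inl_left (a : LampGroup) (P : Multiplicative ℤ[ℝ]) :
    (a * inl P * a⁻¹).left = lampShift a.right P := by
  simp only [mul_left, inv_left, mul_right,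
    left_inl, right_inl, mul_one, map_inv, MulAut.apply_inv_self]
  exact mul_inv_cancel_comm _ _

noncomputable def lamp : LampGroup := inl (.ofAdd 1)

/-- The lamp part of this commutator is `-(X ^ α - 1) * (X ^ β - 1)`, and `ℤ[ℝ]` is a domain. -/
lemma commutator_inr_conj_lamp_left_ne_one {α β : Multiplicative ℝ} (hα : α ≠ 1) (hβ : β ≠ 1) :
    (inr α * (lamp * inr β * lamp⁻¹) * (inr α)⁻¹ * (lamp * inr β * lamp⁻¹)⁻¹).left ≠ 1 := by
  intro hc
  have hlamp := congrArg Multiplicative.toAdd hc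
  simp only [lamp, mul_left, inv_left, mul_right, inv_right, left_inl, right_inl, left_inr,
    right_inr, lampShift_apply, toAdd_one, mul_zero, ofAdd_zero, mul_one, one_mul, inv_one,
    toAdd_inv, toAdd_ofAdd, mul_neg, ofAdd_neg, single_mul_single, add_zero, toAdd_mul,
    mul_inv_cancel_comm, mul_inv_rev, inv_inv, zero_add] at hlamp
  refine mul_ne_zero (single_sub_one_ne_zero (R := ℤ) (a := α.toAdd) (by simpa using hα))
    (single_sub_one_ne_zero (R := ℤ) (a := β.toAdd) (by simpa using hβ)) ?_
  have hinv : (single β.toAdd 1 * single (-β.toAdd) 1 : ℤ[ℝ]) = 1 := by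
    rw [single_mul_single, one_mul, add_neg_cancel, one_def]
  linear_combination -hlamp - hinv

variable {G : Type*} [Group G]

noncomputable def lampHom (f : G →* Multiplicative ℝ) (h : G →* LampGroup)
    (hhf : ∀ x, (h x).right = f x) : f.ker →* Multiplicative ℤ[ℝ] where
  toFun x := (h x).left
  map_one' := by simp
  map_mul' x y := by simp [mul_left, hhf, f.mem_ker.1 x.2]

/-- Conjugating by `g` shifts the lamp parts of `ker f` by `f g`; a finitely generated,
shift-invariant group of lamp configurations is trivial. -/
theorem not_fg_ker_of_lift {f : G →* Multiplicative ℝ} {h : G →* LampGroup} (hhf : ∀ x, (h x).right = f x) (hf : f ≠ 1) {c : G} (hc : f c = 1)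
    (hcl : (h c).left ≠ 1) : ¬ Group.FG f.ker := by
  intro hfg
  obtain ⟨g, hg⟩ := DFunLike.ne_iff.1 hf
  set ℓ := lampHom f h hhf
  have hfg : ℓ.range.FG := (Group.fg_iff_subgroup_fg _).1 inferInstance
  have hshift : ∀ P ∈ ℓ.range, lampShift (h g).right P ∈ ℓ.range := by
    rintro _ ⟨x, rfl⟩
    refine ⟨⟨g * x * g⁻¹, f.normal_ker.conj_mem x x.2 g⟩, ?_⟩
    have hx : h x = inl (h x).left := by
      ext
      · rfl
      · simp [hhf, f.mem_ker.1 x.2]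
    change (h (g * x * g⁻¹)).left = _
    rw [map_mul, map_mul, map_inv, hx, conj_inl_left]
    rfl
  rw [hhf] at hshift
  exact hcl <| (Subgroup.eq_bot_iff_forall _).1
    (Subgroup.eq_bot_of_fg_of_lampShift_mem hfg hg hshift) (ℓ ⟨c, hc⟩) ⟨_, rfl⟩

end LampGroup

namespace RAAG

variable {V : Type*} {Γ : SimpleGraph V} {G : Type*} [Group G]

def lift (F : V → G) (hF : ∀ v w, Γ.Adj v w → Commute (F v) (F w)) : RAAG Γ →* G :=
  PresentedGroup.toGroup (rels := raagRels Γ) (f := F) <| by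
    rintro _ ⟨v, w, hvw, rfl⟩
    simp [(hF v w hvw).eq]

@[simp]
lemma lift_of (F : V → G) (hF : ∀ v w, Γ.Adj v w → Commute (F v) (F w)) (v : V) :
    lift F hF (of v) = F v :=
  PresentedGroup.toGroup.of _

@[ext]
lemma hom_ext {φ ψ : RAAG Γ →* G} (h : ∀ v, φ (of v) = ψ (of v)) : φ = ψ :=
  PresentedGroup.ext h

/-- The vertex set of the living subgraph `L(f)`. -/
def living (f : RAAG Γ →* G) : Set V := {v | f (of v) ≠ 1}

@[simp]
lemma mem_living {f : RAAG Γ →* G} {v : V} : v ∈ living f ↔ f (of v) ≠ 1 := Iff.rfl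

lemma notMem_living {f : RAAG Γ →* G} {v : V} : v ∉ living f ↔ f (of v) = 1 := not_not

lemma ne_one_of_mem_living {f : RAAG Γ →* G} {v : V} (hv : v ∈ living f) : f ≠ 1 :=
  fun h => hv (by simp [h])

lemma living_nonempty {f : RAAG Γ →* G} (hf : f ≠ 1) : (living f).Nonempty := by
  by_contra! h
  exact hf (hom_ext fun v => by simpa using Set.eq_empty_iff_forall_notMem.1 h v)

section Character

open LampGroup

variable {f : RAAG Γ →* Multiplicative ℝ}

theorem not_fg_ker_of_not_dominating (hf : f ≠ 1) {u : V} (hu : u ∉ living f)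
    (hnbr : ∀ w, Γ.Adj u w → w ∉ living f) : ¬ Group.FG f.ker := by
  classical
  let F : V → LampGroup := fun v => if v = u then lamp else inr (f (of v))
  have hF : ∀ v w, Γ.Adj v w → Commute (F v) (F w) := by
    intro v w hvw
    by_cases hv : v = u
    · subst hv
      simp [F, hvw.ne.symm, notMem_living.1 (hnbr w hvw)]
    by_cases hw : w = u
    · subst hw
      simp [F, hv, notMem_living.1 (hnbr v hvw.symm)]
    simpa [F, hv, hw] using (Commute.all _ _).map inr
  refine not_fg_ker_of_lift (h := lift F hF) (fun x => ?_) hf (c := of u) ?_ ?_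
  · change rightHom.comp (lift F hF) x = f x
    congr 1
    ext v
    by_cases hv : v = u
    · subst hv
      simp [F, lamp, notMem_living.1 hu]
    · simp [F, hv]
  · simpa using hu
  · simp [F, lamp]

theorem not_fg_ker_of_disconnected {X Y : Set V} (hXY : Disjoint X Y)
    (hadj : ∀ x ∈ X, ∀ y ∈ Y, ¬ Γ.Adj x y) (hliving : living f ⊆ X ∪ Y)
    {p w : V} (hpX : p ∈ X) (hp : p ∈ living f) (hwY : w ∈ Y) (hw : w ∈ living f) :
    ¬ Group.FG f.ker := by
  classical
  -- Conjugating the `Y`-side by the lamp gives the commutator of `p` and `w` a nonzero lamp part.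
  let F : V → LampGroup := fun v =>
    if v ∈ Y then lamp * inr (f (of v)) * lamp⁻¹ else inr (f (of v))
  have hF : ∀ v w, Γ.Adj v w → Commute (F v) (F w) := by
    intro v w hvw
    by_cases hv : v ∈ living f
    swap
    · simp [F, notMem_living.1 hv]
    by_cases hw : w ∈ living f
    swap
    · simp [F, notMem_living.1 hw]
    have hside : v ∈ Y ↔ w ∈ Y := by
      rcases hliving hv with hvX | hvY <;> rcases hliving hw with hwX | hwY
      · exact ⟨fun h => absurd h (hXY.notMem_of_mem_left hvX),
          fun h => absurd h (hXY.notMem_of_mem_left hwX)⟩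
      · exact absurd hvw (hadj v hvX w hwY)
      · exact absurd hvw.symm (hadj w hwX v hvY)
      · exact iff_of_true hvY hwY
    by_cases hvY : v ∈ Y
    · simpa [F, hvY, hside.1 hvY] using ((Commute.all _ _).map inr).conj lamp
    · simpa [F, hvY, hside.not.1 hvY] using (Commute.all _ _).map inr
  refine not_fg_ker_of_lift (h := lift F hF) (fun x => ?_) (ne_one_of_mem_living hp)
    (c := of p * of w * (of p)⁻¹ * (of w)⁻¹) (by simp) ?_
  · change rightHom.comp (lift F hF) x = f x
    congr 1
    ext v
    by_cases hv : v ∈ Y <;> simp [F, hv]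
  · simpa [F, hXY.notMem_of_mem_left hpX, hwY] using
      commutator_inr_conj_lamp_left_ne_one hp hw

theorem not_fg_ker_of_splitting {A B : Set V}
    (hedges : ∀ a b, Γ.Adj a b → (a ∈ A ∧ b ∈ A) ∨ (a ∈ B ∧ b ∈ B))
    (hcover : A ∪ B = Set.univ) (hdead : ∀ v ∈ A ∩ B, v ∉ living f)
    {p u : V} (hpA : p ∈ A) (hp : p ∈ living f) (huB : u ∈ B) (huA : u ∉ A) :
    ¬ Group.FG f.ker := by
  have hpB : p ∉ B := fun hpB => hdead p ⟨hpA, hpB⟩ hp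
  by_cases hw : ∃ w ∈ B \ A, w ∈ living f
  · obtain ⟨w, hw, hwl⟩ := hw
    refine not_fg_ker_of_disconnected disjoint_sdiff_sdiff (fun x hx y hy hxy => ?_)
      (fun v hv => ?_) ⟨hpA, hpB⟩ hp hw hwl
    · rcases hedges x y hxy with h | h
      exacts [hy.2 h.2, hx.2 h.1]
    · rcases (hcover ▸ Set.mem_univ v : v ∈ A ∪ B) with hvA | hvB
      · exact .inl ⟨hvA, fun hvB => hdead v ⟨hvA, hvB⟩ hv⟩
      · exact .inr ⟨hvB, fun hvA => hdead v ⟨hvA, hvB⟩ hv⟩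
  · push Not at hw
    refine not_fg_ker_of_not_dominating (ne_one_of_mem_living hp) (hw u ⟨huB, huA⟩)
      fun w huw => ?_
    have hwB : w ∈ B := ((hedges u w huw).resolve_left fun h => huA h.1).2
    by_cases hwA : w ∈ A
    exacts [hdead w ⟨hwA, hwB⟩, hw w ⟨hwB, hwA⟩]

end Character

end RAAG

theorem stmt_9_general {V : Type*} (Γ : SimpleGraph V)
    (S₁ S₂ S₃ : Set V)
    (hd13 : S₁ ≠ S₃) (hd23 : S₂ ≠ S₃)
    (hcover : S₁ ∪ S₂ = Set.univ) (hmeet : S₁ ∩ S₂ = S₃)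
    (hedges : ∀ a b : V, Γ.Adj a b → (a ∈ S₁ ∧ b ∈ S₁) ∨ (a ∈ S₂ ∧ b ∈ S₂))
    (f : RAAG Γ →* Multiplicative ℝ) (hf0 : f ≠ 1)
    (hfg : Group.FG f.ker) :
    ∃ v ∈ S₃, f (RAAG.of v) ≠ 1 := by
  by_contra! hcon
  subst hmeet
  have hdead : ∀ v ∈ S₁ ∩ S₂, v ∉ RAAG.living f := fun v hv =>
    RAAG.notMem_living.2 (hcon v hv)
  obtain ⟨p, hp⟩ := RAAG.living_nonempty hf0
  rcases (hcover ▸ Set.mem_univ p : p ∈ S₁ ∪ S₂) with hp1 | hp2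
  · obtain ⟨u, hu2, hu1⟩ : ∃ u ∈ S₂, u ∉ S₁ := by
      by_contra! h
      exact hd23 (Set.inter_eq_right.2 h).symm
    exact RAAG.not_fg_ker_of_splitting hedges hcover hdead hp1 hp hu2 hu1 hfg
  · obtain ⟨u, hu1, hu2⟩ : ∃ u ∈ S₁, u ∉ S₂ := by
      by_contra! h
      exact hd13 (Set.inter_eq_left.2 h).symm
    exact RAAG.not_fg_ker_of_splitting (fun a b hab => (hedges a b hab).symm)
      (Set.union_comm S₁ S₂ ▸ hcover) (fun v hv => hdead v ⟨hv.2, hv.1⟩) hp2 hp hu1 hu2 hfg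

/-- Let Γ be a finite connected graph, (Γ₁, Γ₂, Γ₃) a splitting of Γ (full
subgraphs encoded by their vertex sets), and f : A(Γ) → ℝ a nonzero discrete character with
finitely generated kernel. Then the restriction of f to A(Γ₃) is not identically zero, i.e.
f is nonzero on some generator coming from S₃. -/
theorem stmt_9 {V : Type*} [Fintype V] (Γ : SimpleGraph V) (hconn : Γ.Connected)
    (S₁ S₂ S₃ : Set V)
    (hne1 : S₁.Nonempty) (hne2 : S₂.Nonempty) (hne3 : S₃.Nonempty)
    (hd12 : S₁ ≠ S₂) (hd13 : S₁ ≠ S₃) (hd23 : S₂ ≠ S₃)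
    (hcover : S₁ ∪ S₂ = Set.univ) (hmeet : S₁ ∩ S₂ = S₃)
    (hedges : ∀ a b : V, Γ.Adj a b → (a ∈ S₁ ∧ b ∈ S₁) ∨ (a ∈ S₂ ∧ b ∈ S₂))
    (f : RAAG Γ →* Multiplicative ℝ) (hf0 : f ≠ 1) (hdisc : IsDiscreteChar f)
    (hfg : Group.FG f.ker) :
    ∃ v ∈ S₃, f (RAAG.of v) ≠ 1 :=
  stmt_9_general Γ S₁ S₂ S₃ hd13 hd23 hcover hmeet hedges f hf0 hfg
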